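/- Let M be an individual-rational uniform matching containing transactions m₁ = (b, a₁, q₁, p) and m₂ = (b₁, a, q₂, p) with q₁, q₂ ≥ 1, b ≠ b₁, a ≠ a₁. Replace m₁ and m₂ with the four transactions (b, a₁, q₁−1, p), (b₁, a, q₂−1, p), (b₁, a₁, 1, p), (b, a, 1, p) to obtain M'. Then M' is an individual-rational uniform matching on the same bids and asks, Q(M') = Q(M), Q(ω, M') = Q(ω, M) for every order ω, and the traded quantity between b and a increases by one: Q(a ↔ b, M') = Q(a ↔ b, M) + 1. -/
import Mathlib


structure Bid where
  id : ℕ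
  timestamp : ℕ
  quantity : ℕ
  price : ℕ
deriving DecidableEq

structure Ask where
  id : ℕ
  timestamp : ℕ
  quantity : ℕ
  price : ℕ
deriving DecidableEq

structure Transaction where
  bid : Bid
  ask : Ask
  quantity : ℕ
  price : ℕ
deriving DecidableEq

/-- Total traded quantity of a list of transactions. -/
def Qty (M : List Transaction) : ℕ := (M.map Transaction.quantity).sum

/-- Total traded quantity of bid `b` in `M`. -/
def QtyBid (b : Bid) (M : List Transaction) : ℕ :=
  ((M.filter (fun m => m.bid == b)).map Transaction.quantity).sum

/-- Total traded quantity of ask `a` in `M`. -/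
def QtyAsk (a : Ask) (M : List Transaction) : ℕ :=
  ((M.filter (fun m => m.ask == a)).map Transaction.quantity).sum

/-- Total traded quantity between bid `b` and ask `a` in `M`. -/
def QtyBidAsk (b : Bid) (a : Ask) (M : List Transaction) : ℕ :=
  ((M.filter (fun m => m.bid == b && m.ask == a)).map Transaction.quantity).sum

/-- Sum of quantities of a list of bids. -/
def QB (B : List Bid) : ℕ := (B.map Bid.quantity).sum

/-- Sum of quantities of a list of asks. -/
def QA (A : List Ask) : ℕ := (A.map Ask.quantity).sum

/-- `M` is a matching between bids `B` and asks `A`. -/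
def Matching (B : List Bid) (A : List Ask) (M : List Transaction) : Prop :=
  (∀ m ∈ M, m.ask.price ≤ m.bid.price) ∧
  (∀ m ∈ M, m.bid ∈ B) ∧
  (∀ m ∈ M, m.ask ∈ A) ∧
  (∀ b ∈ B, QtyBid b M ≤ b.quantity) ∧
  (∀ a ∈ A, QtyAsk a M ≤ a.quantity)

/-- Individual rationality. -/
def IsIR (M : List Transaction) : Prop :=
  ∀ m ∈ M, m.ask.price ≤ m.price ∧ m.price ≤ m.bid.price

/-- Uniformity: all trade prices equal. -/
def IsUniform (M : List Transaction) : Prop :=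
  ∀ m1 ∈ M, ∀ m2 ∈ M, m1.price = m2.price

/-- `b1` is more competitive than `b2`. -/
def MoreCompetitiveBid (b1 b2 : Bid) : Prop :=
  b2.price < b1.price ∨ (b1.price = b2.price ∧ b1.timestamp < b2.timestamp)

/-- `a1` is more competitive than `a2`. -/
def MoreCompetitiveAsk (a1 a2 : Ask) : Prop :=
  a1.price < a2.price ∨ (a1.price = a2.price ∧ a1.timestamp < a2.timestamp)

def FairOnBids (B : List Bid) (M : List Transaction) : Prop :=
  ∀ b1 ∈ B, ∀ b2 ∈ B, MoreCompetitiveBid b1 b2 → 1 ≤ QtyBid b2 M →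
    QtyBid b1 M = b1.quantity

def FairOnAsks (A : List Ask) (M : List Transaction) : Prop :=
  ∀ a1 ∈ A, ∀ a2 ∈ A, MoreCompetitiveAsk a1 a2 → 1 ≤ QtyAsk a2 M →
    QtyAsk a1 M = a1.quantity

def IsFair (B : List Bid) (A : List Ask) (M : List Transaction) : Prop :=
  FairOnBids B M ∧ FairOnAsks A M

/-- "at least as competitive as" order on bids (for sorting, most competitive first). -/
def BidGE (b1 b2 : Bid) : Prop := ¬ MoreCompetitiveBid b2 b1

/-- "at least as competitive as" order on asks (for sorting, most competitive first). -/
def AskGE (a1 a2 : Ask) : Prop := ¬ MoreCompetitiveAsk a2 a1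

lemma Qty_perm {M N : List Transaction} (h : M.Perm N) : Qty M = Qty N :=
  (h.map _).sum_eq

lemma QtyBid_perm (b : Bid) {M N : List Transaction} (h : M.Perm N) :
    QtyBid b M = QtyBid b N := ((h.filter _).map _).sum_eq

lemma QtyAsk_perm (a : Ask) {M N : List Transaction} (h : M.Perm N) :
    QtyAsk a M = QtyAsk a N := ((h.filter _).map _).sum_eq

lemma QtyBidAsk_perm (b : Bid) (a : Ask) {M N : List Transaction} (h : M.Perm N) :
    QtyBidAsk b a M = QtyBidAsk b a N := ((h.filter _).map _).sum_eq

lemma Qty_cons (m : Transaction) (M : List Transaction) :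
    Qty (m :: M) = m.quantity + Qty M := by simp [Qty]

lemma QtyBid_cons (b : Bid) (m : Transaction) (M : List Transaction) :
    QtyBid b (m :: M) = (if m.bid = b then m.quantity else 0) + QtyBid b M := by
  by_cases h : m.bid = b <;> simp [QtyBid, List.filter_cons, h]

lemma QtyAsk_cons (a : Ask) (m : Transaction) (M : List Transaction) :
    QtyAsk a (m :: M) = (if m.ask = a then m.quantity else 0) + QtyAsk a M := by
  by_cases h : m.ask = a <;> simp [QtyAsk, List.filter_cons, h]

lemma QtyBidAsk_cons (b : Bid) (a : Ask) (m : Transaction) (M : List Transaction) :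
    QtyBidAsk b a (m :: M) =
      (if m.bid = b ∧ m.ask = a then m.quantity else 0) + QtyBidAsk b a M := by
  by_cases h1 : m.bid = b <;> by_cases h2 : m.ask = a <;>
    simp [QtyBidAsk, List.filter_cons, h1, h2]

theorem statement_14 (B : List Bid) (A : List Ask) (M M' : List Transaction)
    (b b1 : Bid) (a a1 : Ask) (q1 q2 p : ℕ)
    (hM : Matching B A M) (hIR : IsIR M) (hU : ∀ m ∈ M, m.price = p)
    (hq1 : 1 ≤ q1) (hq2 : 1 ≤ q2) (hbb : b ≠ b1) (haa : a ≠ a1)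
    (hm1 : (⟨b, a1, q1, p⟩ : Transaction) ∈ M)
    (hm2 : (⟨b1, a, q2, p⟩ : Transaction) ∈ M.erase ⟨b, a1, q1, p⟩)
    (hM' : M' = (⟨b, a1, q1 - 1, p⟩ : Transaction) :: (⟨b1, a, q2 - 1, p⟩ : Transaction) ::
      (⟨b1, a1, 1, p⟩ : Transaction) :: (⟨b, a, 1, p⟩ : Transaction) ::
      ((M.erase ⟨b, a1, q1, p⟩).erase ⟨b1, a, q2, p⟩)) :
    Matching B A M' ∧ IsIR M' ∧ (∀ m ∈ M', m.price = p) ∧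
    Qty M' = Qty M ∧
    (∀ β : Bid, QtyBid β M' = QtyBid β M) ∧
    (∀ α : Ask, QtyAsk α M' = QtyAsk α M) ∧
    QtyBidAsk b a M' = QtyBidAsk b a M + 1 := by

  have hm2M : (⟨b1, a, q2, p⟩ : Transaction) ∈ M := List.mem_of_mem_erase hm2
  set R := (M.erase ⟨b, a1, q1, p⟩).erase ⟨b1, a, q2, p⟩ with hR
  have hRsub : ∀ m ∈ R, m ∈ M := fun m hm =>
    List.mem_of_mem_erase (List.mem_of_mem_erase hm)
  have hperm : M.Perm ((⟨b, a1, q1, p⟩ : Transaction) :: (⟨b1, a, q2, p⟩ : Transaction) :: R) :=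
    (List.perm_cons_erase hm1).trans ((List.perm_cons_erase hm2).cons _)
  obtain ⟨h1a, h1b⟩ := hIR _ hm1
  obtain ⟨h2a, h2b⟩ := hIR _ hm2M
  simp only at h1a h1b h2a h2b
  have hQB : ∀ β : Bid, QtyBid β M' = QtyBid β M := by
    intro β
    rw [QtyBid_perm β hperm, hM']
    simp only [QtyBid_cons]
    by_cases e1 : b = β <;> by_cases e2 : b1 = β <;>
      simp_all <;> omega
  have hQA : ∀ α : Ask, QtyAsk α M' = QtyAsk α M := by
    intro α
    rw [QtyAsk_perm α hperm, hM']
    simp only [QtyAsk_cons]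
    by_cases e1 : a = α <;> by_cases e2 : a1 = α <;>
      simp_all <;> omega
  have hmem : ∀ m ∈ M', m = (⟨b, a1, q1 - 1, p⟩ : Transaction) ∨
      m = (⟨b1, a, q2 - 1, p⟩ : Transaction) ∨ m = (⟨b1, a1, 1, p⟩ : Transaction) ∨
      m = (⟨b, a, 1, p⟩ : Transaction) ∨ m ∈ M := by
    intro m hm
    rw [hM'] at hm
    simp only [List.mem_cons] at hm
    rcases hm with h | h | h | h | h
    · exact Or.inl h
    · exact Or.inr (Or.inl h)
    · exact Or.inr (Or.inr (Or.inl h))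
    · exact Or.inr (Or.inr (Or.inr (Or.inl h)))
    · exact Or.inr (Or.inr (Or.inr (Or.inr (hRsub m h))))
  obtain ⟨hMa, hMb, hMc, hMd, hMe⟩ := hM
  have hbB : b ∈ B := hMb _ hm1
  have hb1B : b1 ∈ B := hMb _ hm2M
  have haA : a ∈ A := hMc _ hm2M
  have ha1A : a1 ∈ A := hMc _ hm1
  refine ⟨⟨?_, ?_, ?_, ?_, ?_⟩, ?_, ?_, ?_, hQB, hQA, ?_⟩
  · intro m hm
    rcases hmem m hm with h | h | h | h | h <;> subst_eqs <;> simp_all <;> omega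
  · intro m hm
    rcases hmem m hm with h | h | h | h | h <;> first
      | (subst h; simp_all)
      | exact hMb _ h
  · intro m hm
    rcases hmem m hm with h | h | h | h | h <;> first
      | (subst h; simp_all)
      | exact hMc _ h
  · intro β hβ; rw [hQB]; exact hMd β hβ
  · intro α hα; rw [hQA]; exact hMe α hα
  · intro m hm
    rcases hmem m hm with h | h | h | h | h <;>
      first | (subst h; exact ⟨by simpa, by simpa⟩) | exact hIR _ h
  · intro m hm
    rcases hmem m hm with h | h | h | h | h <;> first | (subst h; rfl) | exact hU _ h
  · rw [Qty_perm hperm, hM']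
    simp only [Qty_cons]
    omega
  · rw [QtyBidAsk_perm b a hperm, hM']
    simp only [QtyBidAsk_cons]
    have e1 : a1 ≠ a := Ne.symm haa
    have e2 : b1 ≠ b := Ne.symm hbb
    simp [e1, e2]
    omega
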